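/- arXiv:2402.15953 — 2 statements merged into one kernel-verified Lean document; each statement's English description precedes it below -/
import Mathlib

section
/- Let f, g ∈ ℝ^n and let Π ∈ ℝ^{m×n} be random with Π_{j,i} = s_j(i), where the s_j : [n] → {-1,+1} are i.i.d. draws from a 4-wise independent family. Then Var((1/m)·⟨Πf, Πg⟩) ≤ (2/m)·‖f‖₂²·‖g‖₂². -/
open Finset BigOperators
open scoped Classical

/-- A uniformly random sign function from a 4-wise independent family. -/
def FourWiseIndepSigns {Ω : Type*} [Fintype Ω] {n : ℕ} (μ : Ω → ℝ)
    (s : Ω → Fin n → ℝ) : Prop :=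
  ∀ (k : ℕ), k ≤ 4 → ∀ (x : Fin k → Fin n), Function.Injective x →
    ∀ ε : Fin k → ℝ, (∀ j, ε j = 1 ∨ ε j = -1) →
      (∑ ω, (if ∀ j, s ω (x j) = ε j then μ ω else 0)) = (1/2 : ℝ) ^ k

/-- The AMS estimator `(1/m)⟨Πf, Πg⟩` on the i.i.d. product space of `m` rows. -/
noncomputable def amsEst {Ω₀ : Type*} {n m : ℕ} (s : Ω₀ → Fin n → ℝ)
    (f g : Fin n → ℝ) (ω : Fin m → Ω₀) : ℝ :=
  (1 / (m : ℝ)) * ∑ j, (∑ i, s (ω j) i * f i) * (∑ i, s (ω j) i * g i)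

/-!
Each row of `Π` contributes an independent copy of `X = ⟨s, f⟩ ⟨s, g⟩` for a random sign vector
`s`, so the variance of the average of the `m` rows is `Var X / m`. Four-wise independence pins
down the sign moments up to order four: `E[sᵢ sₖ] = δᵢₖ`, and `E[sᵢ sₖ sₚ s_q]` is `1` if the
indices match up in pairs and `0` otherwise. Hence `E X = ⟨f, g⟩` and
`E X² = 2⟨f, g⟩² + ‖f‖²‖g‖² - 2 ∑ fᵢ² gᵢ²`, so that `Var X ≤ ⟨f, g⟩² + ‖f‖²‖g‖² ≤ 2‖f‖²‖g‖²`
by Cauchy–Schwarz.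
-/

section ProductWeights
variable {ι α : Type*} [Fintype ι] [DecidableEq ι] [Fintype α] (μ : α → ℝ)

theorem sum_prod_mul_prod (F : ι → α → ℝ) :
    ∑ ω : ι → α, (∏ j, μ (ω j)) * ∏ j, F j (ω j) = ∏ j, ∑ a, μ a * F j a := by
  rw [Fintype.prod_sum]
  simp_rw [← prod_mul_distrib]

theorem sum_prod_mul_apply (hμ : ∑ a, μ a = 1) (X : α → ℝ) (j₀ : ι) :
    ∑ ω : ι → α, (∏ j, μ (ω j)) * X (ω j₀) = ∑ a, μ a * X a := by
  simpa [mul_ite, sum_ite_irrel, hμ] using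
    sum_prod_mul_prod μ (fun j a => if j = j₀ then X a else 1)

theorem sum_prod_mul_apply_mul_apply (hμ : ∑ a, μ a = 1) (X Y : α → ℝ) {j₀ j₁ : ι}
    (h : j₀ ≠ j₁) :
    ∑ ω : ι → α, (∏ j, μ (ω j)) * (X (ω j₀) * Y (ω j₁))
      = (∑ a, μ a * X a) * ∑ a, μ a * Y a := by
  have factor (j : ι) : ∑ a, μ a * ((if j = j₀ then X a else 1) * (if j = j₁ then Y a else 1))
      = (if j = j₀ then ∑ a, μ a * X a else 1) * (if j = j₁ then ∑ a, μ a * Y a else 1) := by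
    by_cases h₀ : j = j₀ <;> by_cases h₁ : j = j₁ <;> simp_all
  have := sum_prod_mul_prod μ (fun j a => (if j = j₀ then X a else 1) * (if j = j₁ then Y a else 1))
  simp only [factor, prod_mul_distrib, prod_ite_eq', mem_univ, if_true] at this
  exact this

theorem sum_prod_mul_sum (hμ : ∑ a, μ a = 1) (X : α → ℝ) :
    ∑ ω : ι → α, (∏ j, μ (ω j)) * ∑ j, X (ω j) = Fintype.card ι * ∑ a, μ a * X a := by
  calc _ = ∑ j, ∑ ω : ι → α, (∏ j, μ (ω j)) * X (ω j) := by simp_rw [mul_sum]; exact sum_comm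
    _ = _ := by simp only [sum_prod_mul_apply μ hμ X, sum_const, card_univ, nsmul_eq_mul]

theorem sum_prod_mul_sum_sq (hμ : ∑ a, μ a = 1) (X : α → ℝ) :
    ∑ ω : ι → α, (∏ j, μ (ω j)) * (∑ j, X (ω j)) ^ 2
      = Fintype.card ι * ∑ a, μ a * X a ^ 2
        + ((Fintype.card ι : ℝ) ^ 2 - Fintype.card ι) * (∑ a, μ a * X a) ^ 2 := by
  have pair (j j' : ι) : ∑ ω : ι → α, (∏ j, μ (ω j)) * (X (ω j) * X (ω j'))
      = (∑ a, μ a * X a) ^ 2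
        + if j = j' then (∑ a, μ a * X a ^ 2) - (∑ a, μ a * X a) ^ 2 else 0 := by
    split_ifs with h
    · subst h; simp_rw [← sq]; rw [sum_prod_mul_apply μ hμ (fun a => X a ^ 2)]; ring
    · rw [sum_prod_mul_apply_mul_apply μ hμ X X h]; ring
  calc _ = ∑ j, ∑ j', ∑ ω : ι → α, (∏ j, μ (ω j)) * (X (ω j) * X (ω j')) := by
        simp_rw [sq, sum_mul_sum, mul_sum]
        rw [sum_comm]
        simp_rw [sum_comm (γ := ι → α)]
    _ = _ := by
        simp_rw [pair, sum_add_distrib, sum_ite_eq, mem_univ, if_true, sum_const, card_univ,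
          nsmul_eq_mul]
        ring

theorem sum_prod_mul_mean_sq_sub_sq [Nonempty ι] (hμ : ∑ a, μ a = 1) (X : α → ℝ) :
    (∑ ω : ι → α, (∏ j, μ (ω j)) * ((1 / (Fintype.card ι : ℝ)) * ∑ j, X (ω j)) ^ 2)
      - (∑ ω : ι → α, (∏ j, μ (ω j)) * ((1 / (Fintype.card ι : ℝ)) * ∑ j, X (ω j))) ^ 2
      = (1 / (Fintype.card ι : ℝ)) * ((∑ a, μ a * X a ^ 2) - (∑ a, μ a * X a) ^ 2) := by
  have hc : (Fintype.card ι : ℝ) ≠ 0 := by positivity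
  simp_rw [mul_pow, mul_left_comm _ ((1 / (Fintype.card ι : ℝ)) ^ 2),
    mul_left_comm _ (1 / (Fintype.card ι : ℝ)), ← mul_sum,
    sum_prod_mul_sum_sq μ hμ, sum_prod_mul_sum μ hμ]
  field_simp
  ring

end ProductWeights

section Expansion
variable {Ω : Type*} [Fintype Ω] {n : ℕ} (μ : Ω → ℝ) (s : Ω → Fin n → ℝ)

theorem sum_mul_inner_mul_inner_eq_sum (f g : Fin n → ℝ) :
    ∑ ω, μ ω * ((∑ i, s ω i * f i) * (∑ i, s ω i * g i))
      = ∑ i, ∑ k, f i * g k * ∑ ω, μ ω * (s ω i * s ω k) := by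
  simp_rw [sum_mul_sum, mul_sum]
  rw [sum_comm]
  refine sum_congr rfl fun i _ => ?_
  rw [sum_comm]
  exact sum_congr rfl fun k _ => sum_congr rfl fun ω _ => by ring

theorem sum_mul_inner_mul_inner_sq_eq_sum (f g : Fin n → ℝ) :
    ∑ ω, μ ω * ((∑ i, s ω i * f i) * (∑ i, s ω i * g i)) ^ 2
      = ∑ i, ∑ p, ∑ k, ∑ q,
          f i * g k * f p * g q * ∑ ω, μ ω * (s ω i * s ω k * s ω p * s ω q) := by
  simp_rw [sq, sum_mul_sum, mul_sum]
  rw [sum_comm]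
  refine sum_congr rfl fun i _ => ?_
  rw [sum_comm]
  refine sum_congr rfl fun p _ => ?_
  rw [sum_comm]
  refine sum_congr rfl fun k _ => ?_
  rw [sum_comm]
  exact sum_congr rfl fun q _ => sum_congr rfl fun ω _ => by ring

end Expansion

namespace FourWiseIndepSigns
variable {Ω : Type*} [Fintype Ω] {n : ℕ} {μ : Ω → ℝ} {s : Ω → Fin n → ℝ}

theorem sum_eq_one (h4 : FourWiseIndepSigns μ s) : ∑ ω, μ ω = 1 := by
  simpa using h4 0 (by norm_num) Fin.elim0 (fun a => a.elim0) Fin.elim0 (fun j => j.elim0)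

theorem sum_mul_prod_eq_zero (h4 : FourWiseIndepSigns μ s)
    (hsign : ∀ ω i, s ω i = 1 ∨ s ω i = -1) {k : ℕ} (hk0 : k ≠ 0) (hk4 : k ≤ 4)
    {x : Fin k → Fin n} (hx : Function.Injective x) :
    ∑ ω, μ ω * ∏ j, s ω (x j) = 0 := by
  set signs := Fintype.piFinset fun _ : Fin k => ({1, -1} : Finset ℝ)
  have decomp (ω : Ω) : μ ω * ∏ j, s ω (x j)
      = ∑ ε ∈ signs, (if ∀ j, s ω (x j) = ε j then μ ω else 0) * ∏ j, ε j := by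
    rw [sum_eq_single_of_mem (fun j => s ω (x j)) (by simp [signs, hsign])]
    · simp
    · intro ε _ hne
      rw [if_neg fun h => hne (funext h).symm, zero_mul]
  calc ∑ ω, μ ω * ∏ j, s ω (x j)
      = ∑ ε ∈ signs, (∑ ω, if ∀ j, s ω (x j) = ε j then μ ω else 0) * ∏ j, ε j := by
        simp_rw [decomp, sum_mul]
        exact sum_comm
    _ = ∑ ε ∈ signs, (1 / 2) ^ k * ∏ j, ε j := by
        refine sum_congr rfl fun ε hε => ?_
        rw [h4 k hk4 x hx ε (by simpa [signs] using hε)]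
    _ = (1 / 2) ^ k * ∏ _j : Fin k, ∑ e ∈ ({1, -1} : Finset ℝ), e := by
        rw [← mul_sum, prod_univ_sum]
    _ = 0 := by rw [sum_pair (by norm_num)]; simp [hk0]

theorem sum_mul_mul_eq_ite (h4 : FourWiseIndepSigns μ s)
    (hsign : ∀ ω i, s ω i = 1 ∨ s ω i = -1) (i k : Fin n) :
    ∑ ω, μ ω * (s ω i * s ω k) = if i = k then 1 else 0 := by
  split_ifs with h
  · subst h
    simpa [← sq, sq_eq_one_iff.mpr (hsign _ _)] using h4.sum_eq_one
  · have hx : Function.Injective ![i, k] := by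
      intro a b; fin_cases a <;> fin_cases b <;> simp_all [eq_comm]
    simpa using h4.sum_mul_prod_eq_zero hsign (k := 2) (by norm_num) (by norm_num) hx

theorem sum_mul_mul_mul_mul_eq (h4 : FourWiseIndepSigns μ s)
    (hsign : ∀ ω i, s ω i = 1 ∨ s ω i = -1) (i k p q : Fin n) :
    ∑ ω, μ ω * (s ω i * s ω k * s ω p * s ω q)
      = (if i = k ∧ p = q then 1 else 0) + (if i = p ∧ k = q then 1 else 0)
        + (if i = q ∧ k = p then 1 else 0) - 2 * (if i = k ∧ k = p ∧ p = q then 1 else 0) := by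
  have hsq (ω : Ω) (a : Fin n) : s ω a ^ 2 = 1 := sq_eq_one_iff.mpr (hsign ω a)
  have of_repeat (a b c : Fin n)
      (h : ∀ ω, s ω i * s ω k * s ω p * s ω q = s ω a ^ 2 * (s ω b * s ω c)) :
      ∑ ω, μ ω * (s ω i * s ω k * s ω p * s ω q) = if b = c then 1 else 0 := by
    simp_rw [h, hsq, one_mul]
    exact h4.sum_mul_mul_eq_ite hsign b c
  rcases eq_or_ne i k with rfl | hik
  · rw [of_repeat i p q fun ω => by ring]; grind
  rcases eq_or_ne i p with rfl | hip
  · rw [of_repeat i k q fun ω => by ring]; grind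
  rcases eq_or_ne i q with rfl | hiq
  · rw [of_repeat i k p fun ω => by ring]; grind
  rcases eq_or_ne k p with rfl | hkp
  · rw [of_repeat k i q fun ω => by ring]; grind
  rcases eq_or_ne k q with rfl | hkq
  · rw [of_repeat k i p fun ω => by ring]; grind
  rcases eq_or_ne p q with rfl | hpq
  · rw [of_repeat p i k fun ω => by ring]; grind
  have hx : Function.Injective ![i, k, p, q] := by
    intro a b; fin_cases a <;> fin_cases b <;> simp_all [eq_comm]
  simpa [Fin.prod_univ_four, mul_assoc, hik, hip, hiq] using
    h4.sum_mul_prod_eq_zero hsign (k := 4) (by norm_num) le_rfl hx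

theorem sum_mul_inner_mul_inner (h4 : FourWiseIndepSigns μ s)
    (hsign : ∀ ω i, s ω i = 1 ∨ s ω i = -1) (f g : Fin n → ℝ) :
    ∑ ω, μ ω * ((∑ i, s ω i * f i) * (∑ i, s ω i * g i)) = ∑ i, f i * g i := by
  simp [sum_mul_inner_mul_inner_eq_sum, h4.sum_mul_mul_eq_ite hsign]

theorem sum_mul_inner_mul_inner_sq (h4 : FourWiseIndepSigns μ s)
    (hsign : ∀ ω i, s ω i = 1 ∨ s ω i = -1) (f g : Fin n → ℝ) :
    ∑ ω, μ ω * ((∑ i, s ω i * f i) * (∑ i, s ω i * g i)) ^ 2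
      = 2 * (∑ i, f i * g i) ^ 2 + (∑ i, f i ^ 2) * (∑ i, g i ^ 2)
        - 2 * ∑ i, (f i * g i) ^ 2 := by
  have pair_pair : ∑ i, ∑ p, ∑ k, ∑ q, f i * g k * f p * g q *
      (if i = k ∧ p = q then (1 : ℝ) else 0) = (∑ i, f i * g i) ^ 2 := by
    simp [ite_and, sq, sum_mul_sum]
    ring_nf
  have pair_cross : ∑ i, ∑ p, ∑ k, ∑ q, f i * g k * f p * g q *
      (if i = p ∧ k = q then (1 : ℝ) else 0) = (∑ i, f i ^ 2) * (∑ i, g i ^ 2) := by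
    simp [ite_and, sq, sum_mul_sum]
    ring_nf
  have pair_swap : ∑ i, ∑ p, ∑ k, ∑ q, f i * g k * f p * g q *
      (if i = q ∧ k = p then (1 : ℝ) else 0) = (∑ i, f i * g i) ^ 2 := by
    simp [ite_and, sq, sum_mul_sum]
    exact sum_congr rfl fun _ _ => sum_congr rfl fun _ _ => by ring
  have diagonal : ∑ i, ∑ p, ∑ k, ∑ q, f i * g k * f p * g q *
      (if i = k ∧ k = p ∧ p = q then (1 : ℝ) else 0) = ∑ i, (f i * g i) ^ 2 := by
    simp [ite_and, sq]
    ring_nf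
  simp only [sum_mul_inner_mul_inner_sq_eq_sum, h4.sum_mul_mul_mul_mul_eq hsign, mul_sub,
    mul_add, sum_sub_distrib, sum_add_distrib, mul_left_comm _ (2 : ℝ), ← mul_sum, pair_pair,
    pair_cross, pair_swap, diagonal]
  ring

theorem sum_mul_inner_mul_inner_sq_sub_sq_le (h4 : FourWiseIndepSigns μ s)
    (hsign : ∀ ω i, s ω i = 1 ∨ s ω i = -1) (f g : Fin n → ℝ) :
    ∑ ω, μ ω * ((∑ i, s ω i * f i) * (∑ i, s ω i * g i)) ^ 2
      - (∑ ω, μ ω * ((∑ i, s ω i * f i) * (∑ i, s ω i * g i))) ^ 2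
      ≤ 2 * (∑ i, f i ^ 2) * (∑ i, g i ^ 2) := by
  rw [h4.sum_mul_inner_mul_inner_sq hsign, h4.sum_mul_inner_mul_inner hsign]
  have cauchy_schwarz := sum_mul_sq_le_sq_mul_sq univ f g
  have diagonal_nonneg := sum_nonneg fun i (_ : i ∈ univ) => sq_nonneg (f i * g i)
  linarith

end FourWiseIndepSigns

theorem stmt3_general {Ω₀ : Type*} [Fintype Ω₀] (μ₀ : Ω₀ → ℝ)
    {n m : ℕ} (hm : 0 < m) (s : Ω₀ → Fin n → ℝ)
    (hsign : ∀ ω i, s ω i = 1 ∨ s ω i = -1)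
    (h4 : FourWiseIndepSigns μ₀ s)
    (f g : Fin n → ℝ) :
    (∑ ω : Fin m → Ω₀, (∏ j, μ₀ (ω j)) * (amsEst s f g ω) ^ 2)
      - (∑ ω : Fin m → Ω₀, (∏ j, μ₀ (ω j)) * amsEst s f g ω) ^ 2
      ≤ (2 / (m : ℝ)) * (∑ i, (f i) ^ 2) * (∑ i, (g i) ^ 2) := by
  have : Nonempty (Fin m) := ⟨⟨0, hm⟩⟩
  have hmean := sum_prod_mul_mean_sq_sub_sq μ₀ (ι := Fin m) h4.sum_eq_one
    fun a => (∑ i, s a i * f i) * (∑ i, s a i * g i)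
  rw [Fintype.card_fin] at hmean
  calc _ = 1 / (m : ℝ) * (∑ a, μ₀ a * ((∑ i, s a i * f i) * (∑ i, s a i * g i)) ^ 2
          - (∑ a, μ₀ a * ((∑ i, s a i * f i) * (∑ i, s a i * g i))) ^ 2) := hmean
    _ ≤ 1 / (m : ℝ) * (2 * (∑ i, f i ^ 2) * (∑ i, g i ^ 2)) := by
        gcongr
        exact h4.sum_mul_inner_mul_inner_sq_sub_sq_le hsign f g
    _ = _ := by ring

/-- Variance bound for the AMS sketch estimator:
`Var((1/m)⟨Πf,Πg⟩) ≤ (2/m)‖f‖₂²‖g‖₂²`. -/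
theorem stmt3 {Ω₀ : Type*} [Fintype Ω₀] (μ₀ : Ω₀ → ℝ)
    (hμ : ∀ ω, 0 ≤ μ₀ ω) (hμsum : ∑ ω, μ₀ ω = 1)
    {n m : ℕ} (hm : 0 < m) (s : Ω₀ → Fin n → ℝ)
    (hsign : ∀ ω i, s ω i = 1 ∨ s ω i = -1)
    (h4 : FourWiseIndepSigns μ₀ s)
    (f g : Fin n → ℝ) :
    (∑ ω : Fin m → Ω₀, (∏ j, μ₀ (ω j)) * (amsEst s f g ω) ^ 2)
      - (∑ ω : Fin m → Ω₀, (∏ j, μ₀ (ω j)) * amsEst s f g ω) ^ 2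
      ≤ (2 / (m : ℝ)) * (∑ i, (f i) ^ 2) * (∑ i, (g i) ^ 2) :=
  stmt3_general μ₀ hm s hsign h4 f g
end

section
/- Let f, g ∈ ℝ^n and let Π ∈ ℝ^{m×n} be defined by Π_{j,i} = s(i)·𝟙(h(i) = j), with s : [n] → {-1,+1} drawn from a 4-wise independent family and h : [n] → [m] drawn independently from a 2-wise independent family. Then Var(⟨Πf, Πg⟩) ≤ (2/m)·‖f‖₂²·‖g‖₂². -/
/-!
Using `s i ^ 2 = 1`, the estimator splits as `⟨Πf, Πg⟩ = ⟨f, g⟩ + Y` with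
`Y = ∑_{a ≠ b} f a * g b * s a * s b * [h a = h b]`. Pairwise independence of the signs gives
`E Y = 0`, so the variance is `E Y²`. As signs and bins are independent, `E Y²` is a sum over
pairs `(a, b)`, `(c, d)` of off-diagonal index pairs of a sign moment times a bin moment. The sign
moment `E[s a * s b * s c * s d]` is the moment of `∏` over the symmetric difference of `{a, b}`
and `{c, d}`, so by 4-wise independence it is `1` if `{a, b} = {c, d}` and `0` otherwise; the bin
moment is then `P(h a = h b) = 1 / m`. Hence the variance is
`(1 / m) * ∑_{a ≠ b} f a * g b * (f a * g b + f b * g a)`, which `2 x y ≤ x² + y²` bounds by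
`(2 / m) * ‖f‖² * ‖g‖²`.
-/

open Finset BigOperators
open scoped Classical

/-- A uniformly random bin function from a 2-wise independent family. -/
def TwoWiseIndepBins {Ω : Type*} [Fintype Ω] {n m : ℕ} (μ : Ω → ℝ)
    (h : Ω → Fin n → Fin m) : Prop :=
  ∀ (k : ℕ), k ≤ 2 → ∀ (x : Fin k → Fin n), Function.Injective x →
    ∀ v : Fin k → Fin m,
      (∑ ω, (if ∀ j, h ω (x j) = v j then μ ω else 0)) = (1 / (m : ℝ)) ^ k

/-- The Count sketch inner-product estimator `⟨Πf, Πg⟩`. -/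
noncomputable def countEst {Ωs Ωh : Type*} {n m : ℕ}
    (s : Ωs → Fin n → ℝ) (h : Ωh → Fin n → Fin m)
    (f g : Fin n → ℝ) (ωs : Ωs) (ωh : Ωh) : ℝ :=
  ∑ j, (∑ i, (if h ωh i = j then f i * s ωs i else 0)) *
       (∑ i, (if h ωh i = j then g i * s ωs i else 0))

theorem Finset.prod_mul_prod_eq_prod_symmDiff {ι M : Type*} [DecidableEq ι] [CommMonoid M]
    {f : ι → M} (hf : ∀ i, f i * f i = 1) (A B : Finset ι) :
    (∏ i ∈ A, f i) * ∏ i ∈ B, f i = ∏ i ∈ symmDiff A B, f i := by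
  have hAB : (∏ i ∈ A ∩ B, f i) * ∏ i ∈ A ∩ B, f i = 1 := by
    rw [← prod_mul_distrib]; exact prod_eq_one fun i _ => hf i
  rw [← prod_union_inter, symmDiff_eq_sup_sdiff_inf,
    ← prod_sdiff (s₁ := A ∩ B) inter_subset_union, sup_eq_union, inf_eq_inter, mul_assoc, hAB,
    mul_one]

theorem Finset.pair_eq_pair_iff_eq_or_eq_swap {α : Type*} [DecidableEq α] {p q : α × α} :
    ({p.1, p.2} : Finset α) = {q.1, q.2} ↔ q = p ∨ q = p.swap := by
  rw [← coe_inj, coe_pair, coe_pair, Set.pair_eq_pair_iff, Prod.ext_iff, Prod.ext_iff]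
  simp only [Prod.fst_swap, Prod.snd_swap]
  tauto

theorem Finset.sum_mul_boole_add_boole {ι R : Type*} [DecidableEq ι] [NonAssocSemiring R]
    {t : Finset ι} {a b : ι} (ha : a ∈ t) (hb : b ∈ t) (F : ι → R) :
    ∑ q ∈ t, F q * ((if q = a then 1 else 0) + if q = b then 1 else 0) = F a + F b := by
  simp [mul_add, sum_add_distrib, ha, hb]

theorem sum_offDiag_mul_add_mul_le {ι : Type*} [Fintype ι] [DecidableEq ι] (f g : ι → ℝ) :
    ∑ p ∈ (univ : Finset ι).offDiag, f p.1 * g p.2 * (f p.1 * g p.2 + f p.2 * g p.1)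
      ≤ 2 * ((∑ i, f i ^ 2) * ∑ i, g i ^ 2) := by
  have hprod : ∀ F G : ι → ℝ,
      ∑ p ∈ (univ : Finset ι) ×ˢ univ, (F p.1 * G p.2) ^ 2
        = (∑ i, F i ^ 2) * ∑ i, G i ^ 2 := by
    intro F G
    rw [sum_product, sum_mul_sum]
    simp only [mul_pow]
  calc _ ≤ ∑ p ∈ (univ : Finset ι).offDiag,
          (3 * (f p.1 * g p.2) ^ 2 + (g p.1 * f p.2) ^ 2) / 2 :=
        sum_le_sum fun p _ => by nlinarith [sq_nonneg (f p.1 * g p.2 - f p.2 * g p.1)]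
    _ ≤ ∑ p ∈ univ ×ˢ univ, (3 * (f p.1 * g p.2) ^ 2 + (g p.1 * f p.2) ^ 2) / 2 :=
        sum_le_sum_of_subset_of_nonneg (fun p _ => by simp) fun p _ _ => by positivity
    _ = 2 * ((∑ i, f i ^ 2) * ∑ i, g i ^ 2) := by
        rw [← sum_div, sum_add_distrib, ← mul_sum, hprod f g, hprod g f]
        ring

theorem sum_mul_sq_sub_sq_eq_of_eq_add {Ω : Type*} [Fintype Ω] {μ : Ω → ℝ}
    (hμ : ∑ ω, μ ω = 1) {X Y : Ω → ℝ} {c : ℝ}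
    (hXY : ∀ ω, X ω = c + Y ω) (hY : ∑ ω, μ ω * Y ω = 0) :
    ∑ ω, μ ω * X ω ^ 2 - (∑ ω, μ ω * X ω) ^ 2 = ∑ ω, μ ω * Y ω ^ 2 := by
  have hX1 : ∀ ω, μ ω * X ω = c * μ ω + μ ω * Y ω := fun ω => by rw [hXY]; ring
  have hX2 : ∀ ω, μ ω * X ω ^ 2 = c ^ 2 * μ ω + 2 * c * (μ ω * Y ω) + μ ω * Y ω ^ 2 :=
    fun ω => by rw [hXY]; ring
  simp only [hX1, hX2, sum_add_distrib, ← mul_sum, hμ, hY]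
  ring

theorem sum_sum_mul_sum_eq_sum_mul_mul {Ωs Ωh ι : Type*} [Fintype Ωs] [Fintype Ωh]
    (μs : Ωs → ℝ) (μh : Ωh → ℝ) (t : Finset ι) (c : ι → ℝ) (F : ι → Ωs → ℝ)
    (G : ι → Ωh → ℝ) :
    ∑ ωs, ∑ ωh, μs ωs * μh ωh * ∑ i ∈ t, c i * (F i ωs * G i ωh)
      = ∑ i ∈ t, c i * ((∑ ωs, μs ωs * F i ωs) * ∑ ωh, μh ωh * G i ωh) := by
  calc _ = ∑ ωs, ∑ ωh, ∑ i ∈ t, c i * (μs ωs * F i ωs * (μh ωh * G i ωh)) :=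
        sum_congr rfl fun _ _ => sum_congr rfl fun _ _ => by
          rw [mul_sum]; exact sum_congr rfl fun _ _ => by ring
    _ = _ := by
      simp_rw [sum_mul_sum, mul_sum]
      exact (sum_congr rfl fun _ _ => sum_comm).trans sum_comm

namespace FourWiseIndepSigns

variable {Ω : Type*} [Fintype Ω] {n : ℕ} {μ : Ω → ℝ} {s : Ω → Fin n → ℝ}

theorem sum_mul_prod_comp_eq (h4 : FourWiseIndepSigns μ s)
    (hsign : ∀ ω i, s ω i = 1 ∨ s ω i = -1) {k : ℕ} (hk : k ≤ 4) {x : Fin k → Fin n}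
    (hx : Function.Injective x) :
    ∑ ω, μ ω * ∏ j, s ω (x j) = 0 ^ k := by
  set E := Fintype.piFinset fun _ : Fin k => ({1, -1} : Finset ℝ)
  have hmem : ∀ ε, ε ∈ E ↔ ∀ j, ε j = 1 ∨ ε j = -1 := by simp [E]
  have hexpand : ∀ ω, ∏ j, s ω (x j)
      = ∑ ε ∈ E, (∏ j, ε j) * if ∀ j, s ω (x j) = ε j then 1 else 0 := by
    intro ω
    simp only [mul_ite, mul_one, mul_zero, ← funext_iff]
    rw [sum_ite_eq, if_pos ((hmem _).2 fun j => hsign ω (x j))]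
  calc ∑ ω, μ ω * ∏ j, s ω (x j)
      = ∑ ε ∈ E, (∏ j, ε j) * ∑ ω, if ∀ j, s ω (x j) = ε j then μ ω else 0 := by
        simp only [hexpand, mul_sum, mul_ite, mul_one, mul_zero]
        rw [sum_comm]
        exact sum_congr rfl fun _ _ => sum_congr rfl fun _ _ => by split_ifs <;> ring
    _ = ∑ ε ∈ E, (∏ j, ε j) * (1 / 2) ^ k :=
        sum_congr rfl fun ε hε => by rw [h4 k hk x hx ε ((hmem ε).1 hε)]
    _ = (∏ _j : Fin k, ∑ e ∈ ({1, -1} : Finset ℝ), e) * (1 / 2) ^ k := by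
        rw [← sum_mul, prod_univ_sum]
    _ = 0 ^ k := by
        rw [sum_pair (by norm_num), add_neg_cancel, prod_const, card_univ, Fintype.card_fin,
          ← mul_pow, zero_mul]

theorem sum_mul_prod_eq (h4 : FourWiseIndepSigns μ s)
    (hsign : ∀ ω i, s ω i = 1 ∨ s ω i = -1) {A : Finset (Fin n)} (hA : #A ≤ 4) :
    ∑ ω, μ ω * ∏ i ∈ A, s ω i = 0 ^ #A := by
  rw [← h4.sum_mul_prod_comp_eq hsign hA (x := fun j => (A.equivFin.symm j : Fin n))
    (Subtype.val_injective.comp A.equivFin.symm.injective)]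
  refine sum_congr rfl fun ω _ => ?_
  rw [← prod_coe_sort, ← A.equivFin.symm.prod_comp]

theorem sum_mul_mul_eq_zero (h4 : FourWiseIndepSigns μ s)
    (hsign : ∀ ω i, s ω i = 1 ∨ s ω i = -1) {a b : Fin n} (hab : a ≠ b) :
    ∑ ω, μ ω * (s ω a * s ω b) = 0 := by
  simp only [← prod_pair hab, h4.sum_mul_prod_eq hsign (card_le_two.trans (by norm_num)),
    card_pair hab, zero_pow two_ne_zero]

theorem sum_mul_pair_mul_pair_eq (h4 : FourWiseIndepSigns μ s)
    (hsign : ∀ ω i, s ω i = 1 ∨ s ω i = -1) {p q : Fin n × Fin n} (hp : p.1 ≠ p.2)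
    (hq : q.1 ≠ q.2) :
    ∑ ω, μ ω * (s ω p.1 * s ω p.2 * (s ω q.1 * s ω q.2))
      = (if q = p then 1 else 0) + if q = p.swap then 1 else 0 := by
  have hsq : ∀ ω i, s ω i * s ω i = 1 := fun ω i => by
    rcases hsign ω i with h | h <;> simp [h]
  have hcard : #(symmDiff {p.1, p.2} {q.1, q.2}) ≤ 4 :=
    (card_le_card symmDiff_subset_union).trans <| (card_union_le _ _).trans <| by
      grw [card_le_two, card_le_two]
  simp only [← prod_pair hp, ← prod_pair hq, prod_mul_prod_eq_prod_symmDiff (hsq _),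
    h4.sum_mul_prod_eq hsign hcard]
  have hswap : p.swap ≠ p := fun h => hp (congrArg Prod.snd h)
  by_cases hpq : q = p ∨ q = p.swap
  · rw [pair_eq_pair_iff_eq_or_eq_swap.2 hpq, symmDiff_self, bot_eq_empty, card_empty]
    rcases hpq with rfl | rfl <;> simp [hswap, hswap.symm]
  · have hne := symmDiff_nonempty.2 (mt pair_eq_pair_iff_eq_or_eq_swap.1 hpq)
    rw [zero_pow (card_ne_zero.2 hne), if_neg fun h => hpq (Or.inl h),
      if_neg fun h => hpq (Or.inr h), add_zero]

end FourWiseIndepSigns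

theorem TwoWiseIndepBins.sum_mul_ite_eq {Ω : Type*} [Fintype Ω] {n m : ℕ} {μ : Ω → ℝ}
    {h : Ω → Fin n → Fin m} (h2 : TwoWiseIndepBins μ h) {a b : Fin n} (hab : a ≠ b) :
    ∑ ω, μ ω * (if h ω a = h ω b then 1 else 0) = 1 / m := by
  have hinj : Function.Injective ![a, b] := by
    intro i j; fin_cases i <;> fin_cases j <;> simp [hab, hab.symm]
  have hsplit : ∀ ω, μ ω * (if h ω a = h ω b then 1 else 0)
      = ∑ v, if ∀ j, h ω (![a, b] j) = ![v, v] j then μ ω else 0 := by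
    intro ω
    simp [Fin.forall_fin_two, ite_and, eq_comm]
  simp only [hsplit]
  rw [sum_comm]
  simp only [h2 2 le_rfl _ hinj, sum_const, card_univ, Fintype.card_fin, nsmul_eq_mul]
  -- `m * (1 / m) ^ 2 = 1 / m` holds also for `m = 0`
  rw [one_div, inv_pow, sq, mul_inv, ← mul_assoc]
  simpa using inv_mul_mul_self ((m : ℝ)⁻¹)

section CountSketch

variable {Ωs Ωh : Type*} {n m : ℕ} (s : Ωs → Fin n → ℝ) (h : Ωh → Fin n → Fin m)
  (f g : Fin n → ℝ)

noncomputable def countEstOffDiag (ωs : Ωs) (ωh : Ωh) : ℝ :=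
  ∑ p ∈ (univ : Finset (Fin n)).offDiag,
    f p.1 * g p.2 * (s ωs p.1 * s ωs p.2 * if h ωh p.1 = h ωh p.2 then 1 else 0)

variable {s}

theorem countEst_eq_add_countEstOffDiag (hsign : ∀ ω i, s ω i = 1 ∨ s ω i = -1)
    (ωs : Ωs) (ωh : Ωh) :
    countEst s h f g ωs ωh = ∑ i, f i * g i + countEstOffDiag s h f g ωs ωh := by
  have hsq : ∀ i, s ωs i * s ωs i = 1 := fun i => by
    rcases hsign ωs i with hs | hs <;> simp [hs]
  have hpairs : countEst s h f g ωs ωh = ∑ p ∈ univ ×ˢ univ,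
      f p.1 * g p.2 * (s ωs p.1 * s ωs p.2 * if h ωh p.1 = h ωh p.2 then 1 else 0) := by
    rw [countEst, sum_product]
    simp_rw [sum_mul_sum]
    rw [sum_comm]
    refine sum_congr rfl fun a _ => ?_
    rw [sum_comm]
    refine sum_congr rfl fun b _ => ?_
    simp only [ite_mul, mul_ite, mul_zero, zero_mul, mul_one, sum_ite_eq, mem_univ, if_true]
    split_ifs <;> ring
  rw [hpairs, ← diag_union_offDiag, sum_union (disjoint_diag_offDiag _), sum_diag]
  simp [hsq, countEstOffDiag]

end CountSketch

section Moments

variable {Ωs Ωh : Type*} [Fintype Ωs] [Fintype Ωh] {μs : Ωs → ℝ} {μh : Ωh → ℝ}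
  {n m : ℕ} {s : Ωs → Fin n → ℝ} {h : Ωh → Fin n → Fin m}

theorem sum_sum_mul_countEstOffDiag (h4 : FourWiseIndepSigns μs s)
    (hsign : ∀ ω i, s ω i = 1 ∨ s ω i = -1) (f g : Fin n → ℝ) :
    ∑ ωs, ∑ ωh, μs ωs * μh ωh * countEstOffDiag s h f g ωs ωh = 0 := by
  simp only [countEstOffDiag]
  rw [sum_sum_mul_sum_eq_sum_mul_mul]
  refine sum_eq_zero fun p hp => ?_
  rw [h4.sum_mul_mul_eq_zero hsign (mem_offDiag.1 hp).2.2, zero_mul, mul_zero]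

theorem sum_sum_mul_countEstOffDiag_sq (h4 : FourWiseIndepSigns μs s)
    (hsign : ∀ ω i, s ω i = 1 ∨ s ω i = -1) (h2 : TwoWiseIndepBins μh h)
    (f g : Fin n → ℝ) :
    ∑ ωs, ∑ ωh, μs ωs * μh ωh * countEstOffDiag s h f g ωs ωh ^ 2
      = ∑ p ∈ (univ : Finset (Fin n)).offDiag,
          f p.1 * g p.2 * (f p.1 * g p.2 + f p.2 * g p.1) * (1 / m) := by
  have hsq : ∀ ωs ωh, countEstOffDiag s h f g ωs ωh ^ 2
      = ∑ pq ∈ (univ : Finset (Fin n)).offDiag ×ˢ (univ : Finset (Fin n)).offDiag,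
          f pq.1.1 * g pq.1.2 * (f pq.2.1 * g pq.2.2) *
            (s ωs pq.1.1 * s ωs pq.1.2 * (s ωs pq.2.1 * s ωs pq.2.2) *
              ((if h ωh pq.1.1 = h ωh pq.1.2 then 1 else 0) *
                if h ωh pq.2.1 = h ωh pq.2.2 then 1 else 0)) := by
    intro ωs ωh
    rw [sq, countEstOffDiag, sum_mul_sum, sum_product]
    exact sum_congr rfl fun _ _ => sum_congr rfl fun _ _ => by ring
  simp only [hsq]
  rw [sum_sum_mul_sum_eq_sum_mul_mul, sum_product]
  refine sum_congr rfl fun p hp => ?_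
  have hp' := (mem_offDiag.1 hp).2.2
  have hswap : p.swap ∈ (univ : Finset (Fin n)).offDiag := by simpa [eq_comm] using hp
  have hbins : ∀ q ∈ ({p, p.swap} : Finset (Fin n × Fin n)),
      ∑ ωh, μh ωh * ((if h ωh p.1 = h ωh p.2 then 1 else 0) *
        if h ωh q.1 = h ωh q.2 then 1 else 0) = 1 / m := by
    intro q hq
    rw [← h2.sum_mul_ite_eq hp']
    refine sum_congr rfl fun ωh _ => ?_
    rw [mem_insert, mem_singleton] at hq
    rcases hq with hq | hq <;> rw [hq] <;> by_cases hc : h ωh p.1 = h ωh p.2 <;>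
      simp [hc, eq_comm]
  rw [sum_congr rfl fun q hq => by
    rw [h4.sum_mul_pair_mul_pair_eq hsign hp' (mem_offDiag.1 hq).2.2, mul_comm (_ + _),
      ← mul_assoc], sum_mul_boole_add_boole hp hswap, hbins p (by simp), hbins p.swap (by simp)]
  simp only [Prod.fst_swap, Prod.snd_swap]
  ring

end Moments

theorem stmt5_general {Ωs Ωh : Type*} [Fintype Ωs] [Fintype Ωh]
    (μs : Ωs → ℝ) (μh : Ωh → ℝ)
    (hμs1 : ∑ ω, μs ω = 1) (hμh1 : ∑ ω, μh ω = 1)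
    {n m : ℕ}
    (s : Ωs → Fin n → ℝ) (h : Ωh → Fin n → Fin m)
    (hsign : ∀ ω i, s ω i = 1 ∨ s ω i = -1)
    (h4 : FourWiseIndepSigns μs s)
    (h2 : TwoWiseIndepBins μh h)
    (f g : Fin n → ℝ) :
    (∑ ωs, ∑ ωh, μs ωs * μh ωh * (countEst s h f g ωs ωh) ^ 2)
      - (∑ ωs, ∑ ωh, μs ωs * μh ωh * countEst s h f g ωs ωh) ^ 2
      ≤ (2 / (m : ℝ)) * (∑ i, (f i) ^ 2) * (∑ i, (g i) ^ 2) := by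
  have hvar := sum_mul_sq_sub_sq_eq_of_eq_add (μ := fun ω : Ωs × Ωh => μs ω.1 * μh ω.2)
    (by rw [Fintype.sum_prod_type, ← sum_mul_sum, hμs1, hμh1, one_mul])
    (fun ω => countEst_eq_add_countEstOffDiag h f g hsign ω.1 ω.2)
    (by simpa only [Fintype.sum_prod_type] using
      sum_sum_mul_countEstOffDiag (μh := μh) h4 hsign f g)
  simp only [Fintype.sum_prod_type] at hvar
  rw [hvar, sum_sum_mul_countEstOffDiag_sq h4 hsign h2 f g, ← sum_mul]
  calc _ ≤ 2 * ((∑ i, f i ^ 2) * ∑ i, g i ^ 2) * (1 / m) := by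
        gcongr; exact sum_offDiag_mul_add_mul_le f g
    _ = _ := by ring

/-- Variance bound for the Count sketch inner-product estimator:
`Var(⟨Πf,Πg⟩) ≤ (2/m)‖f‖₂²‖g‖₂²`, over the random choice of `s` and `h`. -/
theorem stmt5 {Ωs Ωh : Type*} [Fintype Ωs] [Fintype Ωh]
    (μs : Ωs → ℝ) (μh : Ωh → ℝ)
    (hμs : ∀ ω, 0 ≤ μs ω) (hμh : ∀ ω, 0 ≤ μh ω)
    (hμs1 : ∑ ω, μs ω = 1) (hμh1 : ∑ ω, μh ω = 1)
    {n m : ℕ} (hm : 0 < m)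
    (s : Ωs → Fin n → ℝ) (h : Ωh → Fin n → Fin m)
    (hsign : ∀ ω i, s ω i = 1 ∨ s ω i = -1)
    (h4 : FourWiseIndepSigns μs s)
    (h2 : TwoWiseIndepBins μh h)
    (f g : Fin n → ℝ) :
    (∑ ωs, ∑ ωh, μs ωs * μh ωh * (countEst s h f g ωs ωh) ^ 2)
      - (∑ ωs, ∑ ωh, μs ωs * μh ωh * countEst s h f g ωs ωh) ^ 2
      ≤ (2 / (m : ℝ)) * (∑ i, (f i) ^ 2) * (∑ i, (g i) ^ 2) :=
  stmt5_general μs μh hμs1 hμh1 s h hsign h4 h2 f g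
end
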